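/- For all natural numbers j ≥ 1 and p ≥ 1, the series ∑_{r=p}^∞ arctan( √5·F_{4j} / L_{4jr+2j} ) converges and its sum equals arctan( L_{2j} / (√5·F_{4jp}) ). -/

import Mathlib

def lucas : ℕ → ℕ
  | 0 => 2
  | 1 => 1
  | n + 2 => lucas (n + 1) + lucas n

/-!
With `θ r = arctan (L_{2j} / (√5 F_{4jr}))`, the `r`-th term equals `θ r - θ (r + 1)` by
the subtraction formula for `arctan`, so the series telescopes to `θ p` since `θ r → 0`. The
subtraction formula reduces to three identities, each immediate from Binet's formula:
`F_{2k} = F_k L_k`, `F_{m+2k} = F_m + F_k L_{m+k}` for even `k`, and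
`5 F_m F_{m+2k} + L_k² = L_{m+k}²` for even `m`.
-/

open Real Filter Topology
open scoped goldenRatio

lemma Real.arctan_sub_arctan {x y : ℝ} (h : -1 < x * y) :
    arctan x - arctan y = arctan ((x - y) / (1 + x * y)) := by
  simpa [sub_eq_add_neg] using arctan_add (x := x) (y := -y) (by linarith)

lemma hasSum_of_nonneg_of_eq_sub_succ {g f : ℕ → ℝ} {l : ℝ} (hg : ∀ n, 0 ≤ g n)
    (hgf : ∀ n, g n = f n - f (n + 1)) (hf : Tendsto f atTop (𝓝 l)) :
    HasSum g (f 0 - l) := by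
  refine (hasSum_iff_tendsto_nat_of_nonneg hg _).2 ?_
  simp_rw [hgf, Finset.sum_range_sub']
  exact tendsto_const_nhds.sub hf

lemma Nat.tendsto_fib_atTop : Tendsto Nat.fib atTop atTop :=
  Nat.fib_mono.tendsto_atTop_atTop fun n =>
    ⟨n + 5, (n.le_add_right 5).trans (Nat.le_fib_self (by omega))⟩

lemma lucas_pos : ∀ n, 0 < lucas n
  | 0 => by decide
  | 1 => by decide
  | n + 2 => Nat.add_pos_left (lucas_pos (n + 1)) _

lemma lucas_eq_goldenRatio_pow_add_goldenConj_pow (n : ℕ) :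
    (lucas n : ℝ) = φ ^ n + ψ ^ n := by
  induction n using Nat.twoStepInduction with
  | zero => norm_num [lucas]
  | one => simp [lucas, goldenRatio_add_goldenConj]
  | more n ih₁ ih₂ =>
    rw [lucas, Nat.cast_add, ih₁, ih₂]
    grind

lemma sqrt_five_mul_fib (n : ℕ) : √5 * Nat.fib n = φ ^ n - ψ ^ n := by
  rw [coe_fib_eq]; field_simp

lemma goldenRatio_pow_mul_goldenConj_pow {n : ℕ} (hn : Even n) : φ ^ n * ψ ^ n = 1 := by
  rw [← mul_pow, goldenRatio_mul_goldenConj, hn.neg_one_pow]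

lemma fib_two_mul_eq_fib_mul_lucas (k : ℕ) : Nat.fib (2 * k) = Nat.fib k * lucas k := by
  suffices √5 * (Nat.fib (2 * k) : ℝ) = √5 * (Nat.fib k * lucas k) by
    exact_mod_cast mul_left_cancel₀ (by positivity) this
  rw [← mul_assoc, sqrt_five_mul_fib, sqrt_five_mul_fib,
    lucas_eq_goldenRatio_pow_add_goldenConj_pow]
  ring

lemma fib_add_two_mul_of_even {k : ℕ} (hk : Even k) (m : ℕ) :
    Nat.fib (m + 2 * k) = Nat.fib m + Nat.fib k * lucas (m + k) := by
  suffices √5 * (Nat.fib (m + 2 * k) : ℝ) = √5 * (Nat.fib m + Nat.fib k * lucas (m + k)) by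
    exact_mod_cast mul_left_cancel₀ (by positivity) this
  rw [mul_add, ← mul_assoc, sqrt_five_mul_fib, sqrt_five_mul_fib, sqrt_five_mul_fib,
    lucas_eq_goldenRatio_pow_add_goldenConj_pow]
  linear_combination (φ ^ m - ψ ^ m) * goldenRatio_pow_mul_goldenConj_pow hk

lemma five_mul_fib_mul_fib_add_two_mul_add_lucas_sq {m : ℕ} (hm : Even m) (k : ℕ) :
    5 * Nat.fib m * Nat.fib (m + 2 * k) + lucas k ^ 2 = lucas (m + k) ^ 2 := by
  have h5 : √5 ^ 2 = 5 := sq_sqrt (by norm_num)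
  have hF := sqrt_five_mul_fib m
  have hF' := sqrt_five_mul_fib (m + 2 * k)
  suffices (5 : ℝ) * Nat.fib m * Nat.fib (m + 2 * k) + lucas k ^ 2 = lucas (m + k) ^ 2 by
    exact_mod_cast this
  rw [lucas_eq_goldenRatio_pow_add_goldenConj_pow, lucas_eq_goldenRatio_pow_add_goldenConj_pow]
  linear_combination (-(Nat.fib m * Nat.fib (m + 2 * k) : ℝ)) * h5
    + (√5 * Nat.fib (m + 2 * k)) * hF + (φ ^ m - ψ ^ m) * hF'
    - (φ ^ k + ψ ^ k) ^ 2 * goldenRatio_pow_mul_goldenConj_pow hm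

theorem arctan_sqrt_five_mul_fib_div_lucas_eq_sub {m k : ℕ} (hm : Even m) (hk : Even k)
    (hm₀ : m ≠ 0) :
    arctan (√5 * Nat.fib (2 * k) / lucas (m + k)) =
      arctan (lucas k / (√5 * Nat.fib m)) - arctan (lucas k / (√5 * Nat.fib (m + 2 * k))) := by
  have hF : (0 : ℝ) < Nat.fib m := by exact_mod_cast Nat.fib_pos.2 (Nat.pos_of_ne_zero hm₀)
  have hF' : (0 : ℝ) < Nat.fib (m + 2 * k) := by exact_mod_cast Nat.fib_pos.2 (by omega)
  have hL : (0 : ℝ) < lucas (m + k) := by exact_mod_cast lucas_pos _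
  have h5 : √5 ^ 2 = 5 := sq_sqrt (by norm_num)
  have hdouble : (Nat.fib (2 * k) : ℝ) = Nat.fib k * lucas k := by
    exact_mod_cast fib_two_mul_eq_fib_mul_lucas k
  have hadd : (Nat.fib (m + 2 * k) : ℝ) = Nat.fib m + Nat.fib k * lucas (m + k) := by
    exact_mod_cast fib_add_two_mul_of_even hk m
  have hsq : 5 * (Nat.fib m : ℝ) * Nat.fib (m + 2 * k) + lucas k ^ 2 = lucas (m + k) ^ 2 := by
    exact_mod_cast five_mul_fib_mul_fib_add_two_mul_add_lucas_sq hm k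
  rw [arctan_sub_arctan (neg_one_lt_zero.trans_le (by positivity))]
  congr 1
  field_simp
  rw [h5, hsq, hdouble, hadd]
  ring

theorem stmt11 (j p : ℕ) (hj : 1 ≤ j) (hp : 1 ≤ p) :
    HasSum (fun r : ℕ =>
        Real.arctan (Real.sqrt 5 * (Nat.fib (4 * j) : ℝ) /
          (lucas (4 * j * (p + r) + 2 * j) : ℝ)))
      (Real.arctan ((lucas (2 * j) : ℝ) / (Real.sqrt 5 * (Nat.fib (4 * j * p) : ℝ)))) := by
  set f : ℕ → ℝ := fun r => arctan (lucas (2 * j) / (√5 * Nat.fib (4 * j * (p + r))))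
  have hterm (r : ℕ) :
      arctan (√5 * Nat.fib (4 * j) / lucas (4 * j * (p + r) + 2 * j)) = f r - f (r + 1) := by
    have h := arctan_sqrt_five_mul_fib_div_lucas_eq_sub (m := 4 * j * (p + r)) (k := 2 * j)
      ⟨2 * j * (p + r), by ring⟩ (even_two_mul j) (by positivity)
    rwa [show 2 * (2 * j) = 4 * j by ring,
      show 4 * j * (p + r) + 4 * j = 4 * j * (p + (r + 1)) by ring] at h
  have hf : Tendsto f atTop (𝓝 0) := by
    have hindex : Tendsto (fun r => 4 * j * (p + r)) atTop atTop :=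
      ((tendsto_add_atTop_nat p).const_mul_atTop' (by positivity : 0 < 4 * j)).congr
        fun r => by ring
    have hfib := (tendsto_natCast_atTop_atTop (R := ℝ)).comp (Nat.tendsto_fib_atTop.comp hindex)
    rw [← arctan_zero]
    exact (continuous_arctan.tendsto 0).comp
      (tendsto_const_nhds.div_atTop (hfib.const_mul_atTop (by positivity)))
  simpa [f] using hasSum_of_nonneg_of_eq_sub_succ
    (fun r => arctan_nonneg.2 (by positivity)) hterm hf
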